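/- Let n ≥ 3 be an odd integer, m = (n+1)/2, [k]_n = ((k−1) mod n) + 1, f(i,j) = (m−i)·(−1)^j + n(n−j) + m, and let M be the n×n matrix with M_{i,j} = f((i+j)/2, (j−i)/2 + m) if i and j have the same parity, and M_{i,j} = f([(i+j+n)/2]_n, [(j−i+n)/2 + m]_n) otherwise. Then every row of M, i.e. the sequence (M_{i,1},…,M_{i,n}) for each fixed i ∈ {1,…,n}, has residuum equal to (n²+1)/2. -/

import Mathlib

/-- Residuum of a finite sequence of integers: sort in decreasing order and take
the alternating sum `x̃₁ - x̃₂ + x̃₃ - …`. -/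
def res (l : List ℤ) : ℤ := (l.insertionSort (· ≥ ·)).alternatingSum

/-- The `i`-th row `(M i 1, …, M i n)` of an `n × n` matrix given with 1-based indices. -/
def rowList (n : ℕ) (M : ℕ → ℕ → ℤ) (i : ℕ) : List ℤ :=
  (List.range n).map fun j => M i (j + 1)

/-- The `j`-th column `(M 1 j, …, M n j)`. -/
def colList (n : ℕ) (M : ℕ → ℕ → ℤ) (j : ℕ) : List ℤ :=
  (List.range n).map fun i => M (i + 1) j

/-- The main diagonal `(M 1 1, …, M n n)`. -/
def diagList (n : ℕ) (M : ℕ → ℕ → ℤ) : List ℤ :=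
  (List.range n).map fun i => M (i + 1) (i + 1)

/-- The antidiagonal `(M 1 n, M 2 (n-1), …, M n 1)`, i.e. entries `M i (n+1-i)`. -/
def adiagList (n : ℕ) (M : ℕ → ℕ → ℤ) : List ℤ :=
  (List.range n).map fun i => M (i + 1) (n - i)

/-- `M` (on indices `1..n`) is a normal magic square of subtraction of order `n`
with residuum `r`: its entries are exactly the integers `1,…,n²`, each occurring
once, and every row, every column, the main diagonal and the antidiagonal all
have residuum `r`. -/
def IsMagicSubSquare (n : ℕ) (M : ℕ → ℕ → ℤ) (r : ℤ) : Prop :=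
  ((Finset.Icc 1 n ×ˢ Finset.Icc 1 n).val.map fun p => M p.1 p.2)
      = (Finset.Icc (1 : ℤ) ((n : ℤ) ^ 2)).val ∧
  (∀ i ∈ Finset.Icc 1 n, res (rowList n M i) = r) ∧
  (∀ j ∈ Finset.Icc 1 n, res (colList n M j) = r) ∧
  res (diagList n M) = r ∧
  res (adiagList n M) = r

/-- `[k]_n = ((k-1) mod n) + 1 ∈ {1,…,n}`. -/
def wrap (n k : ℤ) : ℤ := (k - 1) % n + 1

/-- Kochański's indexing function `f(i,j) = (m-i)·(-1)^j + n(n-j) + m`. -/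
def koch (n m i j : ℤ) : ℤ := (m - i) * (if Even j then 1 else -1) + n * (n - j) + m

/-- Kochański's matrix: `M i j = f((i+j)/2, (j-i)/2 + m)` when `i, j` have the same
parity, and `M i j = f([(i+j+n)/2]_n, [(j-i+n)/2 + m]_n)` otherwise. -/
def kochM (n m i j : ℤ) : ℤ :=
  if Even (i + j) then koch n m ((i + j) / 2) ((j - i) / 2 + m)
  else koch n m (wrap n ((i + j + n) / 2)) (wrap n ((j - i + n) / 2 + m))

lemma wrap_bounds {n : ℤ} (k : ℤ) (hn : 0 < n) : 1 ≤ wrap n k ∧ wrap n k ≤ n := by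
  unfold wrap
  have h1 := Int.emod_nonneg (k - 1) (by omega : n ≠ 0)
  have h2 := Int.emod_lt_of_pos (k - 1) hn
  omega

lemma wrap_eq_self {n k : ℤ} (h1 : 1 ≤ k) (h2 : k ≤ n) : wrap n k = k := by
  unfold wrap
  rw [Int.emod_eq_of_lt (by omega) (by omega)]
  ring

lemma wrap_add_n {n : ℤ} (k : ℤ) : wrap n (k + n) = wrap n k := by
  unfold wrap
  rw [show k + n - 1 = k - 1 + n * 1 by ring, Int.add_mul_emod_self_left]

lemma kochM_eq (n m i b : ℤ) (hn : 0 < n) (hm : 2 * m = n + 1)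
    (hi1 : 1 ≤ i) (hi2 : i ≤ n) (hb1 : 1 ≤ b) (hb2 : b ≤ n) :
    kochM n m i (wrap n (i + 2 * b - 2 * m)) = koch n m (wrap n (i + b - m)) b := by
  by_cases hc1 : i + 2 * b ≤ n + 1
  · have hj : wrap n (i + 2 * b - 2 * m) = i + 2 * b - 1 := by
      unfold wrap
      rw [show i + 2 * b - 2 * m - 1 = (i + 2 * b - 2) + n * (-1) by omega,
        Int.add_mul_emod_self_left, Int.emod_eq_of_lt (by omega) (by omega)]
      omega
    rw [hj]
    unfold kochM
    rw [if_neg (by rintro ⟨r, hr⟩; omega)]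
    rw [show (i + (i + 2 * b - 1) + n) / 2 = (i + b - m) + n by omega,
      show ((i + 2 * b - 1) - i + n) / 2 + m = b + n by omega,
      wrap_add_n, wrap_add_n, wrap_eq_self hb1 hb2]
  · by_cases hc2 : i + 2 * b ≤ 2 * n + 1
    · have hj : wrap n (i + 2 * b - 2 * m) = i + 2 * b - n - 1 := by
        unfold wrap
        rw [Int.emod_eq_of_lt (by omega) (by omega)]
        omega
      rw [hj]
      unfold kochM
      rw [if_pos ⟨i + b - m, by omega⟩]
      rw [show (i + (i + 2 * b - n - 1)) / 2 = i + b - m by omega,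
        show ((i + 2 * b - n - 1) - i) / 2 + m = b by omega,
        wrap_eq_self (by omega) (by omega)]
    · have hj : wrap n (i + 2 * b - 2 * m) = i + 2 * b - 2 * n - 1 := by
        unfold wrap
        rw [show i + 2 * b - 2 * m - 1 = (i + 2 * b - 2 * n - 2) + n * 1 by omega,
          Int.add_mul_emod_self_left, Int.emod_eq_of_lt (by omega) (by omega)]
        omega
      rw [hj]
      unfold kochM
      rw [if_neg (by rintro ⟨r, hr⟩; omega)]
      rw [show (i + (i + 2 * b - 2 * n - 1) + n) / 2 = i + b - m by omega,
        show ((i + 2 * b - 2 * n - 1) - i + n) / 2 + m = b by omega,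
        wrap_eq_self hb1 hb2]

lemma s_bounds {n m a : ℤ} (e : ℤ) (hm : 2 * m = n + 1) (ha1 : 1 ≤ a) (ha2 : a ≤ n)
    (he : e = 1 ∨ e = -1) : 1 ≤ (m - a) * e + m ∧ (m - a) * e + m ≤ n := by
  rcases he with h | h <;> subst h <;> constructor <;> nlinarith

lemma koch_eq (n m a j : ℤ) :
    koch n m a j = ((m - a) * (if Even j then 1 else -1) + m) + n * (n - j) := by
  unfold koch; ring

lemma koch_bounds {n m a : ℤ} (j : ℤ) (hm : 2 * m = n + 1) (ha1 : 1 ≤ a) (ha2 : a ≤ n) :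
    n * (n - j) + 1 ≤ koch n m a j ∧ koch n m a j ≤ n * (n - j) + n := by
  rw [koch_eq]
  have := s_bounds (if Even j then (1:ℤ) else -1) hm ha1 ha2 (by split <;> simp)
  constructor <;> linarith [this.1, this.2]



lemma alt_map (g : ℕ → ℤ) : ∀ k : ℕ,
    ((List.range k).map g).alternatingSum = ∑ t ∈ Finset.range k, (-1) ^ t * g t := by
  intro k
  induction k generalizing g with
  | zero => simp
  | succ k ih =>
    rw [List.range_succ_eq_map, List.map_cons, List.alternatingSum_cons, List.map_map,
      ih (g ∘ Nat.succ), Finset.sum_range_succ']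
    have : ∀ t ∈ Finset.range k, ((-1:ℤ)) ^ (t + 1) * g (t + 1) = -((-1) ^ t * (g ∘ Nat.succ) t) := by
      intro t _
      simp [pow_succ, Function.comp]
    rw [Finset.sum_congr rfl this, Finset.sum_neg_distrib]
    simp
    ring

lemma sum_neg_one_pow : ∀ t : ℕ, ∑ k ∈ Finset.range (2 * t + 1), ((-1:ℤ)) ^ k = 1 := by
  intro t
  induction t with
  | zero => simp
  | succ t ih =>
    rw [show 2 * (t + 1) + 1 = (2 * t + 1) + 1 + 1 by ring, Finset.sum_range_succ,
      Finset.sum_range_succ, ih,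
      Even.neg_one_pow (n := 2 * t + 1 + 1) ⟨t + 1, by ring⟩,
      Odd.neg_one_pow (n := 2 * t + 1) ⟨t, by ring⟩]
    ring

lemma sum_neg_one_pow_mul : ∀ t : ℕ, ∑ k ∈ Finset.range (2 * t + 1), ((-1:ℤ)) ^ k * k = t := by
  intro t
  induction t with
  | zero => simp
  | succ t ih =>
    rw [show 2 * (t + 1) + 1 = (2 * t + 1) + 1 + 1 by ring, Finset.sum_range_succ,
      Finset.sum_range_succ, ih,
      Even.neg_one_pow (n := 2 * t + 1 + 1) ⟨t + 1, by ring⟩,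
      Odd.neg_one_pow (n := 2 * t + 1) ⟨t, by ring⟩]
    push_cast
    ring

lemma sum_mod_nat (n : ℕ) (hn : 0 < n) : ∀ r : ℕ,
    ∑ k ∈ Finset.range n, (((r : ℤ) + k) % n) = ∑ k ∈ Finset.range n, (k : ℤ) := by
  intro r
  induction r with
  | zero =>
    apply Finset.sum_congr rfl
    intro k hk
    rw [Finset.mem_range] at hk
    rw [Nat.cast_zero, zero_add, Int.emod_eq_of_lt (by positivity) (by exact_mod_cast hk)]
  | succ r ih =>
    have h1 := Finset.sum_range_succ' (fun k : ℕ => (((r : ℤ) + k) % n)) n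
    have h2 := Finset.sum_range_succ (fun k : ℕ => (((r : ℤ) + k) % n)) n
    have hfn : ((r : ℤ) + (n : ℤ)) % (n : ℤ) = ((r : ℤ) + (0 : ℕ)) % (n : ℤ) := by
      rw [show (r : ℤ) + (n : ℤ) = ((r : ℤ) + (0:ℕ)) + (n : ℤ) * 1 by push_cast; ring,
        Int.add_mul_emod_self_left]
    have hstep : ∑ k ∈ Finset.range n, ((((r:ℕ)+1 : ℕ) : ℤ) + k) % (n:ℤ)
        = ∑ k ∈ Finset.range n, (((r : ℤ) + (k + 1 : ℕ)) % n) := by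
      apply Finset.sum_congr rfl
      intro k _
      push_cast
      ring_nf
    rw [hstep]
    simp only [Nat.cast_add] at h1 h2
    push_cast at h1 h2 hfn ⊢
    rw [show ∑ k ∈ Finset.range n, ((r : ℤ) + ((k:ℤ) + 1)) % (n:ℤ)
        = ∑ k ∈ Finset.range n, ((r : ℤ) + (k:ℤ)) % (n:ℤ) + ((r:ℤ)+(n:ℤ)) % n - ((r:ℤ)+0) % n
        by push_cast at *; linarith]
    push_cast at ih
    rw [ih]
    push_cast at *
    linarith

lemma sum_mod (n : ℕ) (hn : 0 < n) (c : ℤ) :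
    ∑ k ∈ Finset.range n, ((c + k) % (n : ℤ)) = ∑ k ∈ Finset.range n, (k : ℤ) := by
  have hne : (n : ℤ) ≠ 0 := by positivity
  have h0 : 0 ≤ c % n := Int.emod_nonneg c hne
  have key : ∀ k : ℕ, (c + k) % (n : ℤ) = (((c % n).toNat : ℤ) + k) % n := by
    intro k
    rw [Int.toNat_of_nonneg h0]
    conv_lhs => rw [show c + (k:ℤ) = (c % n + k) + (n:ℤ) * (c / n) by
      have := Int.mul_ediv_add_emod c n; linarith]
    rw [Int.add_mul_emod_self_left]
  simp_rw [key]
  exact sum_mod_nat n hn _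


lemma rows_aux (n i t : ℕ) (ht : n = 2 * t + 1) (hi1 : 1 ≤ i) (hi2 : i ≤ n)
    (m : ℤ) (hm : 2 * m = (n : ℤ) + 1) :
    res (rowList n (fun a b => kochM (n : ℤ) m (a : ℤ) (b : ℤ)) i) = ((n : ℤ) ^ 2 + 1) / 2 := by
  have hNpos : 0 < (n : ℤ) := by omega
  have hI1 : 1 ≤ (i : ℤ) := by exact_mod_cast hi1
  have hI2 : (i : ℤ) ≤ (n : ℤ) := by exact_mod_cast hi2
  set E : ℕ → ℤ := fun k => koch (n : ℤ) m (wrap (n : ℤ) ((i : ℤ) + (k : ℤ) + 1 - m)) ((k : ℤ) + 1)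
    with hE
  have hw : ∀ k : ℕ, 1 ≤ wrap (n:ℤ) ((i:ℤ) + (k:ℤ) + 1 - m) ∧
      wrap (n:ℤ) ((i:ℤ) + (k:ℤ) + 1 - m) ≤ (n:ℤ) := fun k => wrap_bounds _ hNpos
  -- decreasing
  have hdec : ∀ k k' : ℕ, k < k' → k' < n → E k' < E k := by
    intro k k' hkk' _
    have h1 := (koch_bounds (n := (n:ℤ)) (m := m) ((k:ℤ)+1) hm (hw k).1 (hw k).2).1
    have h2 := (koch_bounds (n := (n:ℤ)) (m := m) ((k':ℤ)+1) hm (hw k').1 (hw k').2).2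
    have hkk : (k:ℤ) + 1 ≤ (k':ℤ) := by exact_mod_cast hkk'
    have hmul : (n:ℤ) * ((n:ℤ) - ((k':ℤ)+1)) + (n:ℤ) ≤ (n:ℤ) * ((n:ℤ) - ((k:ℤ)+1)) := by
      nlinarith
    simp only [hE]
    linarith
  have hpair : ((List.range n).map E).Pairwise (· > ·) := by
    rw [List.pairwise_map]
    refine List.Pairwise.imp_of_mem ?_ (List.pairwise_lt_range (n := n))
    intro a b ha hb hab
    exact hdec a b hab (List.mem_range.mp hb)
  have hsortedL : ((List.range n).map E).Pairwise (· ≥ ·) := hpair.imp fun h => le_of_lt h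
  have hnodupL : ((List.range n).map E).Nodup := hpair.imp fun h => ne_of_gt h
  -- subset
  have hsub : ((List.range n).map E) ⊆ rowList n (fun a b => kochM (n:ℤ) m (a:ℤ) (b:ℤ)) i := by
    intro x hx
    rw [List.mem_map] at hx
    obtain ⟨k, hk, rfl⟩ := hx
    rw [List.mem_range] at hk
    have hb2 : (k:ℤ) + 1 ≤ (n:ℤ) := by exact_mod_cast hk
    have hmain := kochM_eq (n:ℤ) m (i:ℤ) ((k:ℤ)+1) hNpos hm hI1 hI2 (by omega) hb2
    have hJb := wrap_bounds ((i:ℤ) + 2*((k:ℤ)+1) - 2*m) hNpos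
    rw [rowList, List.mem_map]
    refine ⟨(wrap (n:ℤ) ((i:ℤ) + 2*((k:ℤ)+1) - 2*m) - 1).toNat, List.mem_range.mpr (by omega), ?_⟩
    have hc : (((wrap (n:ℤ) ((i:ℤ) + 2*((k:ℤ)+1) - 2*m) - 1).toNat + 1 : ℕ) : ℤ)
        = wrap (n:ℤ) ((i:ℤ) + 2*((k:ℤ)+1) - 2*m) := by push_cast; omega
    show kochM (n:ℤ) m (i:ℤ) _ = E k
    rw [hc, hmain]
    simp only [hE]
    rw [show (i:ℤ) + ((k:ℤ)+1) - m = (i:ℤ) + (k:ℤ) + 1 - m by ring]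
  have hlen : (rowList n (fun a b => kochM (n:ℤ) m (a:ℤ) (b:ℤ)) i).length
      ≤ ((List.range n).map E).length := by simp [rowList]
  have hperm := (hnodupL.subperm hsub).perm_of_length_le hlen
  have heq : (rowList n (fun a b => kochM (n:ℤ) m (a:ℤ) (b:ℤ)) i).insertionSort (· ≥ ·)
      = (List.range n).map E :=
    List.Perm.eq_of_pairwise'
      (List.pairwise_insertionSort _ _) hsortedL
      ((List.perm_insertionSort _ _).trans hperm.symm)
  rw [res, heq, alt_map E n]
  -- now the sum computation
  have hterm : ∀ k ∈ Finset.range n, (-1:ℤ)^k * E k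
      = wrap (n:ℤ) ((i:ℤ) + (k:ℤ) + 1 - m)
        + (((-1:ℤ)^k) * ((n:ℤ)*((n:ℤ)-1)+m) - ((-1:ℤ)^k * (k:ℤ)) * (n:ℤ) - m) := by
    intro k _
    simp only [hE]
    rw [koch_eq]
    rcases Nat.even_or_odd k with hk | hk
    · have hne : ¬ Even ((k:ℤ)+1) := by
        obtain ⟨c, hc⟩ := hk; rintro ⟨d, hd⟩; omega
      rw [if_neg hne, hk.neg_one_pow]
      ring
    · have hev : Even ((k:ℤ)+1) := by
        obtain ⟨c, hc⟩ := hk; exact ⟨(c:ℤ)+1, by push_cast [hc]; ring⟩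
      rw [if_pos hev, hk.neg_one_pow]
      ring
  rw [Finset.sum_congr rfl hterm, Finset.sum_add_distrib, Finset.sum_sub_distrib,
    Finset.sum_sub_distrib, ← Finset.sum_mul, ← Finset.sum_mul, Finset.sum_const,
    Finset.card_range, nsmul_eq_mul]
  have hA1 : ∑ k ∈ Finset.range n, ((-1:ℤ))^k = 1 := by rw [ht]; exact sum_neg_one_pow t
  have hA2 : ∑ k ∈ Finset.range n, ((-1:ℤ))^k * (k:ℤ) = t := by rw [ht]; exact sum_neg_one_pow_mul t
  have hwsum : ∑ k ∈ Finset.range n, wrap (n:ℤ) ((i:ℤ) + (k:ℤ) + 1 - m)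
      = ∑ k ∈ Finset.range n, (k:ℤ) + n := by
    have hc : ∀ k ∈ Finset.range n, wrap (n:ℤ) ((i:ℤ) + (k:ℤ) + 1 - m)
        = (((i:ℤ) - m) + (k:ℤ)) % (n:ℤ) + 1 := by
      intro k _
      unfold wrap
      rw [show (i:ℤ) + (k:ℤ) + 1 - m - 1 = ((i:ℤ) - m) + (k:ℤ) by ring]
    rw [Finset.sum_congr rfl hc, Finset.sum_add_distrib, Finset.sum_const, Finset.card_range,
      nsmul_eq_mul, mul_one, sum_mod n (by omega) ((i:ℤ) - m)]
  rw [hA1, hA2, hwsum]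
  have hS : 2 * (∑ k ∈ Finset.range n, (k:ℤ)) = (n:ℤ) * ((n:ℤ) - 1) := by
    have h1 : (∑ k ∈ Finset.range n, (k:ℤ)) = ((∑ k ∈ Finset.range n, k : ℕ) : ℤ) := by
      push_cast; rfl
    rw [h1, show (2:ℤ) * ((∑ k ∈ Finset.range n, k : ℕ) : ℤ)
        = (((∑ k ∈ Finset.range n, k) * 2 : ℕ) : ℤ) by push_cast; ring,
      Finset.sum_range_id_mul_two n]
    push_cast [Nat.cast_sub (by omega : 1 ≤ n)]
    ring
  have hgoal : ((n:ℤ)^2 + 1) / 2 = (n:ℤ)*m - m + 1 := by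
    rw [show (n:ℤ)^2 + 1 = 2 * ((n:ℤ)*m - m + 1) by linear_combination (1 - (n:ℤ)) * hm]
    omega
  rw [hgoal]
  have hNt : (n:ℤ) = 2*(t:ℤ)+1 := by exact_mod_cast ht
  nlinarith [hS, hm, hNt]


/-- Every row of Kochański's matrix has residuum `(n²+1)/2`. -/
theorem kochanski_rows (n : ℕ) (hn : 3 ≤ n) (hodd : Odd n)
    (i : ℕ) (hi : i ∈ Finset.Icc 1 n) :
    res (rowList n (fun a b => kochM (n : ℤ) (((n : ℤ) + 1) / 2) (a : ℤ) (b : ℤ)) i)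
      = ((n : ℤ) ^ 2 + 1) / 2 := by
  obtain ⟨t, ht⟩ := hodd
  rw [Finset.mem_Icc] at hi
  exact rows_aux n i t ht hi.1 hi.2 _ (by omega)
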